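/- arXiv:2008.11240 — 3 statements merged into one kernel-verified Lean document; each statement's English description precedes it below -/
import Mathlib

section
/- Define f_1(ρ) = ρ/sinh(ρ) for ρ > 0 and recursively f_{l+1} = −df_l/dσ where σ = cosh(ρ), i.e., f_{l+1}(ρ) = −(1/sinh(ρ))·f_l'(ρ). Then for every l ≥ 1, f_l is positive and decreasing in ρ on (0, ∞). -/
/-- `hf l` is the function `f_{l+1}` of the paper: `hf 0 = f_1 = ρ/sinh ρ`,
and `f_{l+1} = -(1/sinh ρ) · f_l'` (derivative with respect to `σ = cosh ρ`). -/
noncomputable def hf : ℕ → ℝ → ℝ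
  | 0 => fun ρ => ρ / Real.sinh ρ
  | (l + 1) => fun ρ => -(1 / Real.sinh ρ) * deriv (hf l) ρ

/-!
In the variable `σ = cosh ρ` the functions have the integral representation
`f_{l+1}(ρ) = ∫₀¹ 2 l! (2u)^l / (u² + 2uσ + 1)^(l+1) du`: differentiating the integrand in `σ`
turns the kernel of index `l` into minus the kernel of index `l + 1`, and for `l = 0` the integral
is elementary, because `u² + 2u cosh ρ + 1 = (u + e^ρ)(u + e^(-ρ))`. The kernels are positive and
decreasing in `σ ≥ 0`, and `cosh` is increasing on `(0, ∞)`.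
-/

open Real Set intervalIntegral MeasureTheory
open scoped Nat Interval

noncomputable def hfKernel (l : ℕ) (σ u : ℝ) : ℝ :=
  2 * l ! * (2 * u) ^ l / (u ^ 2 + 2 * u * σ + 1) ^ (l + 1)

noncomputable def hfSigma (l : ℕ) (σ : ℝ) : ℝ := ∫ u in (0 : ℝ)..1, hfKernel l σ u

section Kernel

variable {l : ℕ} {σ u : ℝ}

lemma one_le_sq_add_two_mul_add_one (hσ : 0 ≤ σ) (hu : 0 ≤ u) : 1 ≤ u ^ 2 + 2 * u * σ + 1 := by
  have : 0 ≤ u ^ 2 + 2 * u * σ := by positivity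
  linarith

lemma hfKernel_nonneg (hσ : 0 ≤ σ) (hu : 0 ≤ u) : 0 ≤ hfKernel l σ u := by
  unfold hfKernel; positivity

lemma hfKernel_pos (hσ : 0 ≤ σ) (hu : 0 < u) : 0 < hfKernel l σ u := by
  unfold hfKernel; positivity

lemma hfKernel_le_of_mem_Icc (hσ : 0 ≤ σ) (hu : u ∈ Icc (0 : ℝ) 1) :
    hfKernel l σ u ≤ 2 * l ! * 2 ^ l := by
  have hQ : 1 ≤ (u ^ 2 + 2 * u * σ + 1) ^ (l + 1) :=
    one_le_pow₀ (one_le_sq_add_two_mul_add_one hσ hu.1)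
  obtain ⟨hu₀, hu₁⟩ := hu
  calc hfKernel l σ u ≤ 2 * l ! * (2 * u) ^ l := div_le_self (by positivity) hQ
    _ ≤ 2 * l ! * 2 ^ l := by gcongr; linarith

lemma hfKernel_antitoneOn (hu : 0 ≤ u) : AntitoneOn (hfKernel l · u) (Ici 0) := by
  intro σ₁ hσ₁ σ₂ _ h
  apply div_le_div_of_nonneg_left (by positivity)
    (pow_pos (zero_lt_one.trans_le (one_le_sq_add_two_mul_add_one hσ₁ hu)) _)
  have := one_le_sq_add_two_mul_add_one hσ₁ hu
  gcongr

lemma continuousOn_hfKernel (hσ : 0 ≤ σ) : ContinuousOn (hfKernel l σ) (Ici 0) := by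
  refine ContinuousOn.div (by fun_prop) (by fun_prop) fun u hu => ?_
  exact pow_ne_zero _ (zero_lt_one.trans_le (one_le_sq_add_two_mul_add_one hσ hu)).ne'

lemma intervalIntegrable_hfKernel (hσ : 0 ≤ σ) :
    IntervalIntegrable (hfKernel l σ) volume 0 1 :=
  (continuousOn_hfKernel hσ).mono (by simp [Icc_subset_Ici_self])
    |>.intervalIntegrable

lemma hasDerivAt_hfKernel (hQ : u ^ 2 + 2 * u * σ + 1 ≠ 0) :
    HasDerivAt (hfKernel l · u) (-hfKernel (l + 1) σ u) σ := by
  have hQpow : HasDerivAt (fun σ => (u ^ 2 + 2 * u * σ + 1) ^ (l + 1))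
      ((l + 1 : ℕ) * (u ^ 2 + 2 * u * σ + 1) ^ l * (2 * u)) σ := by
    simpa using
      (((hasDerivAt_id σ).const_mul (2 * u)).const_add (u ^ 2)).add_const 1 |>.fun_pow (l + 1)
  refine ((hasDerivAt_const σ (2 * (l ! : ℝ) * (2 * u) ^ l)).div hQpow
    (pow_ne_zero _ hQ)).congr_deriv ?_
  unfold hfKernel
  generalize u ^ 2 + 2 * u * σ + 1 = Q at hQ ⊢
  rw [Nat.factorial_succ]
  field_simp
  push_cast
  ring

end Kernel

lemma hfSigma_pos (l : ℕ) {σ : ℝ} (hσ : 0 ≤ σ) : 0 < hfSigma l σ :=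
  intervalIntegral_pos_of_pos_on (intervalIntegrable_hfKernel hσ)
    (fun _ hu => hfKernel_pos hσ hu.1) zero_lt_one

lemma hfSigma_antitoneOn (l : ℕ) : AntitoneOn (hfSigma l) (Ici 0) := fun _ hσ₁ _ hσ₂ h =>
  integral_mono_on zero_le_one (intervalIntegrable_hfKernel hσ₂) (intervalIntegrable_hfKernel hσ₁)
    fun _ hu => hfKernel_antitoneOn hu.1 hσ₁ hσ₂ h

lemma hasDerivAt_hfSigma (l : ℕ) {σ : ℝ} (hσ : 0 < σ) :
    HasDerivAt (hfSigma l) (-hfSigma (l + 1) σ) σ := by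
  have hIoc : ∀ u ∈ Ι (0 : ℝ) 1, u ∈ Icc (0 : ℝ) 1 := by
    intro u hu
    rw [uIoc_of_le zero_le_one] at hu
    exact Ioc_subset_Icc_self hu
  have key := hasDerivAt_integral_of_dominated_loc_of_deriv_le (μ := volume)
    (F := fun σ u => hfKernel l σ u) (F' := fun σ u => -hfKernel (l + 1) σ u)
    (bound := fun _ => 2 * (l + 1)! * 2 ^ (l + 1))
    (Ioi_mem_nhds hσ)
    (Filter.eventually_of_mem (Ioi_mem_nhds hσ) fun σ' hσ' =>
      (intervalIntegrable_hfKernel (le_of_lt hσ')).def'.aestronglyMeasurable)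
    (intervalIntegrable_hfKernel hσ.le)
    (intervalIntegrable_hfKernel hσ.le).def'.aestronglyMeasurable.neg
    (Filter.Eventually.of_forall fun u hu σ' hσ' => by
      rw [norm_neg, Real.norm_of_nonneg (hfKernel_nonneg (le_of_lt hσ') (hIoc u hu).1)]
      exact hfKernel_le_of_mem_Icc (le_of_lt hσ') (hIoc u hu))
    intervalIntegrable_const
    (Filter.Eventually.of_forall fun u hu σ' hσ' => hasDerivAt_hfKernel
      (zero_lt_one.trans_le (one_le_sq_add_two_mul_add_one (le_of_lt hσ') (hIoc u hu).1)).ne')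
  rw [intervalIntegral.integral_neg] at key
  exact key.2

lemma integral_inv_add_const {c : ℝ} (hc : 0 < c) :
    ∫ u in (0 : ℝ)..1, (u + c)⁻¹ = log ((1 + c) / c) := by
  rw [integral_comp_add_right (fun x => x⁻¹), zero_add]
  exact integral_inv_of_pos hc (by linarith)

lemma intervalIntegrable_inv_add_const {c : ℝ} (hc : 0 < c) :
    IntervalIntegrable (fun u => (u + c)⁻¹) volume 0 1 := by
  refine intervalIntegrable_inv (fun u hu => ?_) (by fun_prop)
  rw [uIcc_of_le zero_le_one] at hu
  linarith [hu.1]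

lemma hfSigma_zero_cosh {ρ : ℝ} (hρ : 0 < ρ) : hfSigma 0 (cosh ρ) = ρ / sinh ρ := by
  have hs : sinh ρ ≠ 0 := (sinh_pos_iff.2 hρ).ne'
  have partial_fractions : ∀ u ∈ [[(0 : ℝ), 1]],
      hfKernel 0 (cosh ρ) u = (sinh ρ)⁻¹ * ((u + exp (-ρ))⁻¹ - (u + exp ρ)⁻¹) := by
    intro u hu
    rw [uIcc_of_le zero_le_one] at hu
    have h₁ : 0 < u + exp ρ := by linarith [hu.1, exp_pos ρ]
    have h₂ : 0 < u + exp (-ρ) := by linarith [hu.1, exp_pos (-ρ)]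
    have hfac : u ^ 2 + 2 * u * cosh ρ + 1 = (u + exp ρ) * (u + exp (-ρ)) := by
      rw [cosh_eq, exp_neg]
      field_simp
      ring
    rw [hfKernel, hfac]
    field_simp
    rw [sinh_eq]
    ring
  have hlog : log ((1 + exp (-ρ)) / exp (-ρ)) - log ((1 + exp ρ) / exp ρ) = ρ := by
    have : (1 + exp (-ρ)) / exp (-ρ) = exp ρ * ((1 + exp ρ) / exp ρ) := by
      rw [exp_neg]; field_simp; ring
    rw [this, log_mul (exp_ne_zero ρ) (by positivity), log_exp]
    ring
  rw [hfSigma, integral_congr partial_fractions, intervalIntegral.integral_const_mul,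
    integral_sub (intervalIntegrable_inv_add_const (exp_pos _))
      (intervalIntegrable_inv_add_const (exp_pos _)),
    integral_inv_add_const (exp_pos _), integral_inv_add_const (exp_pos _), hlog, inv_mul_eq_div]

lemma hf_eq_hfSigma_cosh (l : ℕ) {ρ : ℝ} (hρ : 0 < ρ) : hf l ρ = hfSigma l (cosh ρ) := by
  induction l generalizing ρ with
  | zero => exact (hfSigma_zero_cosh hρ).symm
  | succ l ih =>
    have hs : sinh ρ ≠ 0 := (sinh_pos_iff.2 hρ).ne'
    have hev : hf l =ᶠ[nhds ρ] hfSigma l ∘ cosh :=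
      Filter.eventually_of_mem (Ioi_mem_nhds hρ) fun _ hρ' => ih hρ'
    have hderiv : HasDerivAt (hfSigma l ∘ cosh) (-hfSigma (l + 1) (cosh ρ) * sinh ρ) ρ :=
      (hasDerivAt_hfSigma l (cosh_pos ρ)).comp ρ (hasDerivAt_cosh ρ)
    show -(1 / sinh ρ) * deriv (hf l) ρ = _
    rw [hev.deriv_eq, hderiv.deriv]
    field_simp

theorem f_pos_antitone (l : ℕ) :
    (∀ ρ : ℝ, 0 < ρ → 0 < hf l ρ) ∧ AntitoneOn (hf l) (Set.Ioi 0) := by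
  refine ⟨fun ρ hρ => ?_, fun ρ₁ hρ₁ ρ₂ hρ₂ h => ?_⟩
  · rw [hf_eq_hfSigma_cosh l hρ]
    exact hfSigma_pos l (cosh_pos ρ).le
  · rw [hf_eq_hfSigma_cosh l hρ₁, hf_eq_hfSigma_cosh l hρ₂]
    refine hfSigma_antitoneOn l (cosh_pos ρ₁).le (cosh_pos ρ₂).le ?_
    rw [cosh_le_cosh, abs_of_pos hρ₁, abs_of_pos (mem_Ioi.1 hρ₂)]
    exact h
end

section
/- With f_1(ρ) = ρ/sinh(ρ) and f_{l+1} = −df_l/dσ (σ = cosh ρ), for every l ≥ 1 the function −f_{l+1}/f_l is nondecreasing in σ, i.e., (d/dσ)(−f_{l+1}/f_l) ≥ 0 on (0, ∞). -/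
open Real MeasureTheory Set Filter Topology
open scoped Nat

lemma inv_cosh_le_two_mul_exp_neg (t : ℝ) : (cosh t)⁻¹ ≤ 2 * exp (-t) := by
  have h : exp (-t) * exp t = 1 := by rw [← exp_add, neg_add_cancel, exp_zero]
  rw [inv_le_iff_one_le_mul₀ (cosh_pos t), cosh_eq]
  nlinarith [sq_nonneg (exp (-t))]

lemma integrableOn_inv_cosh : IntegrableOn (fun t => (cosh t)⁻¹) (Ioi 0) :=
  ((integrableOn_exp_neg_Ioi 0).const_mul 2).mono'
    (continuous_cosh.inv₀ fun t => (cosh_pos t).ne').aestronglyMeasurable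
    (Eventually.of_forall fun t => by
      rw [norm_inv, norm_of_nonneg (cosh_pos t).le]
      exact inv_cosh_le_two_mul_exp_neg t)

lemma one_le_cosh_add_cosh (x t : ℝ) : 1 ≤ cosh x + cosh t := by
  linarith [one_le_cosh x, cosh_pos t]

lemma inv_cosh_add_cosh_pow_le (n : ℕ) (x t : ℝ) :
    ((cosh x + cosh t) ^ (n + 1))⁻¹ ≤ (cosh t)⁻¹ := by
  apply inv_anti₀ (cosh_pos t)
  calc cosh t ≤ cosh x + cosh t := by linarith [cosh_pos x]
    _ ≤ (cosh x + cosh t) ^ (n + 1) := le_self_pow₀ (one_le_cosh_add_cosh x t) (by omega)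

lemma abs_sinh_mul_inv_cosh_add_cosh_pow_le (n : ℕ) (x t : ℝ) :
    |sinh x| * ((cosh x + cosh t) ^ (n + 2))⁻¹ ≤ (cosh t)⁻¹ := by
  have hc := one_le_cosh_add_cosh x t
  rw [← div_eq_mul_inv, div_le_iff₀ (by positivity), inv_mul_eq_div,
    le_div_iff₀ (cosh_pos t)]
  calc |sinh x| * cosh t ≤ (cosh x + cosh t) * (cosh x + cosh t) := by
        gcongr
        · linarith [abs_sinh x, sinh_lt_cosh |x|, cosh_abs x, cosh_pos t]
        · linarith [cosh_pos x]
    _ = (cosh x + cosh t) ^ 2 := by ring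
    _ ≤ (cosh x + cosh t) ^ (n + 2) := pow_le_pow_right₀ hc (by omega)

lemma integrableOn_inv_cosh_add_cosh_pow (n : ℕ) (x : ℝ) :
    IntegrableOn (fun t => ((cosh x + cosh t) ^ (n + 1))⁻¹) (Ioi 0) := by
  refine integrableOn_inv_cosh.mono' ?_ (Eventually.of_forall fun t => ?_)
  · exact (Continuous.inv₀ (by fun_prop)
      fun t => (pow_pos (by positivity) _).ne').aestronglyMeasurable
  · rw [norm_of_nonneg (by positivity)]
    exact inv_cosh_add_cosh_pow_le n x t

noncomputable def coshIntegral (n : ℕ) (ρ : ℝ) : ℝ :=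
  ∫ t in Ioi 0, ((cosh ρ + cosh t) ^ (n + 1))⁻¹

lemma hasDerivAt_inv_cosh_add_cosh_pow (n : ℕ) (x t : ℝ) :
    HasDerivAt (fun x => ((cosh x + cosh t) ^ (n + 1))⁻¹)
      (-(n + 1) * sinh x * ((cosh x + cosh t) ^ (n + 2))⁻¹) x := by
  have hc : cosh x + cosh t ≠ 0 := by linarith [one_le_cosh_add_cosh x t]
  refine ((((hasDerivAt_cosh x).add_const (cosh t)).fun_pow (n + 1)).fun_inv
    (pow_ne_zero _ hc)).congr_deriv ?_
  rw [Nat.add_sub_cancel]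
  field_simp
  push_cast
  ring

lemma hasDerivAt_coshIntegral (n : ℕ) (ρ : ℝ) :
    HasDerivAt (coshIntegral n) (-(n + 1) * sinh ρ * coshIntegral (n + 1) ρ) ρ := by
  have hmeas : ∀ x, AEStronglyMeasurable (fun t => ((cosh x + cosh t) ^ (n + 1))⁻¹)
      (volume.restrict (Ioi 0)) := fun x =>
    (integrableOn_inv_cosh_add_cosh_pow n x).aestronglyMeasurable
  have h := hasDerivAt_integral_of_dominated_loc_of_deriv_le (x₀ := ρ) univ_mem
    (Eventually.of_forall hmeas) (integrableOn_inv_cosh_add_cosh_pow n ρ)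
    (((integrableOn_inv_cosh_add_cosh_pow (n + 1) ρ).const_mul _).aestronglyMeasurable)
    (bound := fun t => (n + 1) * (cosh t)⁻¹)
    (Eventually.of_forall fun t x _ => by
      rw [norm_mul, norm_mul, mul_assoc, norm_neg,
        norm_of_nonneg (by positivity : (0 : ℝ) ≤ n + 1), Real.norm_eq_abs, norm_of_nonneg (by positivity)]
      exact mul_le_mul_of_nonneg_left (abs_sinh_mul_inv_cosh_add_cosh_pow_le n x t) (by positivity))
    (integrableOn_inv_cosh.const_mul _)
    (Eventually.of_forall fun t x _ => hasDerivAt_inv_cosh_add_cosh_pow n x t)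
  refine h.2.congr_deriv ?_
  rw [integral_const_mul]
  rfl

lemma coshIntegral_pos (n : ℕ) (ρ : ℝ) : 0 < coshIntegral n ρ := by
  have hsupp : Function.support (fun t => ((cosh ρ + cosh t) ^ (n + 1))⁻¹) = univ :=
    Function.support_eq_univ fun t => by positivity
  rw [coshIntegral, setIntegral_pos_iff_support_of_nonneg_ae
    (Eventually.of_forall fun t => by positivity) (integrableOn_inv_cosh_add_cosh_pow n ρ),
    hsupp, univ_inter, Real.volume_Ioi]
  exact ENNReal.zero_lt_top

lemma hasDerivAt_log_one_add_exp_const_sub (c t : ℝ) :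
    HasDerivAt (fun t => log (1 + exp (c - t))) (-(1 + exp (t - c))⁻¹) t := by
  refine ((((hasDerivAt_id t).const_sub c).exp.const_add 1).log (by positivity)).congr_deriv ?_
  rw [id, exp_sub, exp_sub]
  field_simp
  ring

lemma tendsto_log_one_add_exp_const_sub (c : ℝ) :
    Tendsto (fun t => log (1 + exp (c - t))) atTop (𝓝 0) := by
  have h : Tendsto (fun t => 1 + exp c * exp (-t)) atTop (𝓝 1) := by
    simpa using (tendsto_exp_neg_atTop_nhds_zero.const_mul (exp c)).const_add 1
  simpa [Function.comp_def, sub_eq_add_neg, exp_add] using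
    (continuousAt_log one_ne_zero).tendsto.comp h

lemma coshIntegral_zero {ρ : ℝ} (hρ : ρ ≠ 0) : coshIntegral 0 ρ = ρ / sinh ρ := by
  have hderiv : ∀ t, HasDerivAt (fun t => log (1 + exp (-ρ - t)) - log (1 + exp (ρ - t)))
      (sinh ρ * (cosh ρ + cosh t)⁻¹) t := fun t => by
    refine ((hasDerivAt_log_one_add_exp_const_sub (-ρ) t).sub
      (hasDerivAt_log_one_add_exp_const_sub ρ t)).congr_deriv ?_
    simp only [sub_neg_eq_add, sinh_eq, cosh_eq, exp_add, exp_sub, exp_neg]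
    field_simp
    ring
  have hint : IntegrableOn (fun t => (cosh ρ + cosh t)⁻¹) (Ioi 0) := by
    simpa using integrableOn_inv_cosh_add_cosh_pow 0 ρ
  have h := integral_Ioi_of_hasDerivAt_of_tendsto' (fun t _ => hderiv t) (hint.const_mul _)
    ((tendsto_log_one_add_exp_const_sub (-ρ)).sub (tendsto_log_one_add_exp_const_sub ρ))
  have hval : log (1 + exp (ρ - 0)) = ρ + log (1 + exp (-ρ - 0)) := by
    rw [← exp_eq_exp, exp_add, exp_log (by positivity), exp_log (by positivity), sub_zero,
      sub_zero, exp_neg]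
    field_simp
    ring
  rw [integral_const_mul, hval] at h
  rw [coshIntegral, eq_div_iff (sinh_ne_zero.2 hρ)]
  simp only [zero_add, pow_one]
  linarith

theorem sq_integral_mul_le_integral_mul_integral_mul_sq {α : Type*} [MeasurableSpace α]
    {μ : Measure α} {w g : α → ℝ} (hw : 0 ≤ᵐ[μ] w) (hw_int : Integrable w μ)
    (hwg : Integrable (fun a => w a * g a) μ) (hwg2 : Integrable (fun a => w a * g a ^ 2) μ) :
    (∫ a, w a * g a ∂μ) ^ 2 ≤ (∫ a, w a ∂μ) * ∫ a, w a * g a ^ 2 ∂μ := by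
  have hquad : ∀ s : ℝ, 0 ≤ (∫ a, w a ∂μ) * (s * s) + (-2 * ∫ a, w a * g a ∂μ) * s
      + ∫ a, w a * g a ^ 2 ∂μ := fun s => by
    have hnonneg : 0 ≤ ∫ a, w a * (s - g a) ^ 2 ∂μ :=
      integral_nonneg_of_ae (hw.mono fun a ha => mul_nonneg ha (sq_nonneg _))
    have hexpand : (fun a => w a * (s - g a) ^ 2)
        = fun a => (s * s) * w a + (-2 * s) * (w a * g a) + w a * g a ^ 2 := by
      ext a; ring
    rw [hexpand, integral_add (f := fun a => (s * s) * w a + (-2 * s) * (w a * g a))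
      ((hw_int.const_mul _).add (hwg.const_mul _)) hwg2,
      integral_add (hw_int.const_mul _) (hwg.const_mul _), integral_const_mul,
      integral_const_mul] at hnonneg
    linarith
  have := discrim_le_zero hquad
  rw [discrim] at this
  linarith

lemma sq_coshIntegral_succ_le (n : ℕ) (ρ : ℝ) :
    coshIntegral (n + 1) ρ ^ 2 ≤ coshIntegral n ρ * coshIntegral (n + 2) ρ := by
  set c : ℝ → ℝ := fun t => cosh ρ + cosh t
  have hwg : (fun t => (c t ^ (n + 1))⁻¹ * (c t)⁻¹) = fun t => (c t ^ (n + 1 + 1))⁻¹ := by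
    ext t; rw [← mul_inv, ← pow_succ]
  have hwg2 : (fun t => (c t ^ (n + 1))⁻¹ * (c t)⁻¹ ^ 2) = fun t => (c t ^ (n + 2 + 1))⁻¹ := by
    ext t; rw [inv_pow, ← mul_inv, ← pow_add]
  have h := sq_integral_mul_le_integral_mul_integral_mul_sq (μ := volume.restrict (Ioi 0))
    (w := fun t => (c t ^ (n + 1))⁻¹) (g := fun t => (c t)⁻¹)
    (Eventually.of_forall fun t => by positivity) (integrableOn_inv_cosh_add_cosh_pow n ρ)
    (by rw [hwg]; exact integrableOn_inv_cosh_add_cosh_pow (n + 1) ρ)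
    (by rw [hwg2]; exact integrableOn_inv_cosh_add_cosh_pow (n + 2) ρ)
  rwa [hwg, hwg2] at h

lemma hf_eq_factorial_mul_coshIntegral (l : ℕ) {ρ : ℝ} (hρ : ρ ≠ 0) :
    hf l ρ = (l)! * coshIntegral l ρ := by
  induction l generalizing ρ with
  | zero => simp [hf, coshIntegral_zero hρ]
  | succ l ih =>
    have hev : hf l =ᶠ[𝓝 ρ] fun x => (l)! * coshIntegral l x :=
      eventually_of_mem (isOpen_ne.mem_nhds hρ) fun x hx => ih hx
    have hderiv : deriv (hf l) ρ = (l)! * (-(l + 1) * sinh ρ * coshIntegral (l + 1) ρ) := by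
      rw [hev.deriv_eq]
      exact ((hasDerivAt_coshIntegral l ρ).const_mul _).deriv
    change -(1 / sinh ρ) * deriv (hf l) ρ = _
    rw [hderiv, Nat.factorial_succ]
    push_cast
    field_simp [sinh_ne_zero.2 hρ]

lemma hf_succ_div_hf (l : ℕ) {ρ : ℝ} (hρ : ρ ≠ 0) :
    hf (l + 1) ρ / hf l ρ = (l + 1) * (coshIntegral (l + 1) ρ / coshIntegral l ρ) := by
  rw [hf_eq_factorial_mul_coshIntegral _ hρ, hf_eq_factorial_mul_coshIntegral _ hρ,
    Nat.factorial_succ]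
  push_cast
  field_simp [(coshIntegral_pos l ρ).ne']

/-- Yu–Zhao: `-f_{l+1}/f_l` is nondecreasing in `σ = cosh ρ`, i.e. its
σ-derivative `(1/sinh ρ)·d/dρ` is nonnegative. -/
theorem neg_ratio_monotone (l : ℕ) (ρ : ℝ) (hρ : 0 < ρ) :
    0 ≤ (1 / Real.sinh ρ) * deriv (fun x => -(hf (l + 1) x / hf l x)) ρ := by
  have hF : ∀ k, 0 < coshIntegral k ρ := fun k => coshIntegral_pos k ρ
  have hev : (fun x => -(hf (l + 1) x / hf l x)) =ᶠ[𝓝 ρ]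
      fun x => -((l + 1) * (coshIntegral (l + 1) x / coshIntegral l x)) :=
    eventually_of_mem (isOpen_ne.mem_nhds hρ.ne') fun x hx =>
      congrArg Neg.neg (hf_succ_div_hf l hx)
  have hderiv := (((hasDerivAt_coshIntegral (l + 1) ρ).fun_div (hasDerivAt_coshIntegral l ρ)
    (hF l).ne').const_mul ((l : ℝ) + 1)).fun_neg
  have hσ : (1 / sinh ρ) * deriv (fun x => -(hf (l + 1) x / hf l x)) ρ
      = (l + 1) * ((l + 2) * coshIntegral l ρ * coshIntegral (l + 2) ρ
        - (l + 1) * coshIntegral (l + 1) ρ ^ 2) / coshIntegral l ρ ^ 2 := by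
    rw [hev.deriv_eq, hderiv.deriv]
    push_cast
    field_simp [(sinh_pos_iff.2 hρ).ne']
    ring
  have hCS := sq_coshIntegral_succ_le l ρ
  rw [hσ]
  refine div_nonneg (mul_nonneg (by positivity) ?_) (sq_nonneg _)
  nlinarith [mul_pos (hF l) (hF (l + 2))]
end

section
/- Let α_1 = 1 and α_{2m+1} = f_1·α_{2m−1} − 2t·∂α_{2m−1}/∂σ, where σ = cosh ρ, f_1 = ρ/sinh ρ, and f_{l+1} = −df_l/dσ. Then for every m ≥ 1, α_{2m+1}(t,ρ) = Σ_{i=0}^{m−1} t^i P_{m,i}(f_1,…,f_m) where each P_{m,i} is a polynomial with nonnegative coefficients; in particular α_{2m+1} > 0 for all t, ρ > 0. -/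
/-- `alphaOdd m = α_{2m+1}`: the Davies–Mandouvalos recursion `α_1 = 1`,
`α_{2m+1} = f_1 α_{2m-1} - 2 t ∂α_{2m-1}/∂σ` where `∂/∂σ = (1/sinh ρ)·∂/∂ρ`. -/
noncomputable def alphaOdd : ℕ → ℝ → ℝ → ℝ
  | 0 => fun _ _ => 1
  | (m + 1) => fun t ρ =>
      (ρ / Real.sinh ρ) * alphaOdd m t ρ -
        2 * t * ((1 / Real.sinh ρ) * deriv (alphaOdd m t) ρ)

/-!
Substituting `u = tanh (s/2)` and then `u = sin θ` in `∫₀^∞ ds / (σ + cosh s) = ρ / sinh ρ`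
gives `f_1 = 2 ∫₀^{π/2} cos θ / (cos² θ (σ - 1) + 2) dθ`, and differentiating under the integral
sign, `f_{l+1} = 2 l! ∫₀^{π/2} cos^{2l+1} θ / (cos² θ (σ - 1) + 2)^{l+1} dθ > 0`.

Write `X n` for `f_{n+1}`. Since `-∂/∂σ` sends `f_{n+1}` to `f_{n+2}`, it acts on polynomials in
the `f`'s as the derivation `D` with `D (X n) = X (n + 1)`, and the recursion becomes
`α_{2k+3} = X 0 · α_{2k+1} + 2t · D α_{2k+1}` with `α_3 = X 0`. Both operations preserve
nonnegativity of coefficients, `α_{2k+3}` involves only `X 0, …, X k`, and its coefficient of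
`t⁰` is `X 0 ^ (k+1)`, which is positive.
-/

open Real Finset MvPolynomial
open scoped Nat

namespace MvPolynomial

section NonnegCoeffs

variable (σ R : Type*) [CommSemiring R] [PartialOrder R] [IsOrderedRing R]

def nonnegCoeffs : Subsemiring (MvPolynomial σ R) where
  carrier := {p | ∀ d, 0 ≤ coeff d p}
  mul_mem' {p q} hp hq d := by
    classical
    rw [coeff_mul]
    exact sum_nonneg fun x _ => mul_nonneg (hp _) (hq _)
  one_mem' d := by
    classical
    rw [coeff_one]
    split_ifs <;> simp
  add_mem' hp hq d := by rw [coeff_add]; exact add_nonneg (hp d) (hq d)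
  zero_mem' d := by simp

variable {σ R}

theorem nonnegCoeffs_eq_closure :
    nonnegCoeffs σ R = Subsemiring.closure (Set.range X ∪ C '' Set.Ici 0) := by
  refine le_antisymm (fun p hp => ?_) (Subsemiring.closure_le.2 ?_)
  · rw [p.as_sum]
    refine Subsemiring.sum_mem _ fun d _ => ?_
    rw [monomial_eq]
    exact Subsemiring.mul_mem _ (Subsemiring.subset_closure (.inr ⟨_, hp d, rfl⟩))
      (Subsemiring.prod_mem _ fun n _ =>
        Subsemiring.pow_mem _ (Subsemiring.subset_closure (.inl ⟨n, rfl⟩)) _)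
  · classical
    rintro _ (⟨n, rfl⟩ | ⟨r, hr, rfl⟩) d
    · rw [coeff_X]
      split_ifs <;> simp
    · rw [coeff_C]
      split_ifs
      exacts [hr, le_rfl]

theorem X_mem_nonnegCoeffs (n : σ) : X n ∈ nonnegCoeffs σ R := by
  rw [nonnegCoeffs_eq_closure]
  exact Subsemiring.subset_closure (.inl ⟨n, rfl⟩)

theorem smul_mem_nonnegCoeffs {r : R} (hr : 0 ≤ r) {p : MvPolynomial σ R}
    (hp : p ∈ nonnegCoeffs σ R) : r • p ∈ nonnegCoeffs σ R := fun d => by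
  rw [coeff_smul, smul_eq_mul]
  exact mul_nonneg hr (hp d)

theorem eval_nonneg_of_mem_nonnegCoeffs {p : MvPolynomial σ R} (hp : p ∈ nonnegCoeffs σ R)
    {x : σ → R} (hx : ∀ n, 0 ≤ x n) : 0 ≤ eval x p := by
  rw [nonnegCoeffs_eq_closure] at hp
  induction hp using Subsemiring.closure_induction with
  | mem q hq =>
    rcases hq with ⟨n, rfl⟩ | ⟨r, hr, rfl⟩
    · simpa using hx n
    · simpa using hr
  | zero => simp
  | one => simp
  | add p q _ _ hp hq => rw [map_add]; exact add_nonneg hp hq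
  | mul p q _ _ hp hq => rw [map_mul]; exact mul_nonneg hp hq

theorem derivation_mem_nonnegCoeffs (D : Derivation R (MvPolynomial σ R) (MvPolynomial σ R))
    (hD : ∀ n, D (X n) ∈ nonnegCoeffs σ R) {p : MvPolynomial σ R}
    (hp : p ∈ nonnegCoeffs σ R) : D p ∈ nonnegCoeffs σ R := by
  rw [nonnegCoeffs_eq_closure] at hp
  induction hp using Subsemiring.closure_induction with
  | mem q hq =>
    rcases hq with ⟨n, rfl⟩ | ⟨r, -, rfl⟩
    · exact hD n
    · rw [derivation_C]; exact zero_mem _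
  | zero => rw [map_zero]; exact zero_mem _
  | one => rw [Derivation.map_one_eq_zero]; exact zero_mem _
  | add p q _ _ hp hq => rw [map_add]; exact add_mem hp hq
  | mul p q hp hq ihp ihq =>
    rw [← nonnegCoeffs_eq_closure] at hp hq
    rw [Derivation.leibniz, smul_eq_mul, smul_eq_mul]
    exact add_mem (mul_mem hp ihq) (mul_mem hq ihp)

end NonnegCoeffs

variable {σ R : Type*} [CommSemiring R]

theorem derivation_mem_supported (D : Derivation R (MvPolynomial σ R) (MvPolynomial σ R))
    {s t : Set σ} (hst : s ⊆ t) (hD : ∀ n ∈ s, D (X n) ∈ supported R t)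
    {p : MvPolynomial σ R} (hp : p ∈ supported R s) : D p ∈ supported R t := by
  induction hp using Algebra.adjoin_induction with
  | mem q hq =>
    obtain ⟨n, hn, rfl⟩ := hq
    exact hD n hn
  | algebraMap r => rw [D.map_algebraMap]; exact zero_mem _
  | add p q _ _ hp hq => rw [map_add]; exact add_mem hp hq
  | mul p q hp hq ihp ihq =>
    rw [Derivation.leibniz, smul_eq_mul, smul_eq_mul]
    exact add_mem (mul_mem (supported_mono hst hp) ihq) (mul_mem (supported_mono hst hq) ihp)

theorem hasDerivAt_eval_of_derivation {𝕜 : Type*} [NontriviallyNormedField 𝕜]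
    (D : Derivation 𝕜 (MvPolynomial σ 𝕜) (MvPolynomial σ 𝕜)) {g : σ → 𝕜 → 𝕜} {x : 𝕜}
    (hg : ∀ n, HasDerivAt (g n) (eval (fun n => g n x) (D (X n))) x) (p : MvPolynomial σ 𝕜) :
    HasDerivAt (fun y => eval (fun n => g n y) p) (eval (fun n => g n x) (D p)) x := by
  induction p using MvPolynomial.induction_on with
  | C a => simpa only [eval_C, derivation_C, map_zero] using hasDerivAt_const x a
  | add p q hp hq => simpa only [map_add] using hp.fun_add hq
  | mul_X p n hp =>
    simp only [eval_mul, eval_X, Derivation.leibniz, smul_eq_mul, map_add]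
    exact (hp.fun_mul (hg n)).congr_deriv (by ring)

end MvPolynomial

theorem hasDerivAt_intervalIntegral_of_continuous {E : Type*} [NormedAddCommGroup E]
    [NormedSpace ℝ E] {F F' : ℝ → ℝ → E} {a b x₀ : ℝ}
    (hF : Continuous (Function.uncurry F)) (hF' : Continuous (Function.uncurry F'))
    (hderiv : ∀ x t, HasDerivAt (fun x => F x t) (F' x t) x) :
    HasDerivAt (fun x => ∫ t in a..b, F x t) (∫ t in a..b, F' x₀ t) x₀ := by
  obtain ⟨C, hC⟩ := ((isCompact_closedBall x₀ 1).prod isCompact_uIcc).exists_bound_of_continuousOn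
    hF'.continuousOn
  exact (intervalIntegral.hasDerivAt_integral_of_dominated_loc_of_deriv_le (bound := fun _ => C)
    (Metric.closedBall_mem_nhds x₀ one_pos)
    (.of_forall fun x => (hF.uncurry_left x).aestronglyMeasurable)
    ((hF.uncurry_left x₀).intervalIntegrable a b) (hF'.uncurry_left x₀).aestronglyMeasurable
    (.of_forall fun t ht x hx => hC (x, t) ⟨hx, Set.uIoc_subset_uIcc ht⟩)
    intervalIntegrable_const (.of_forall fun t _ x _ => hderiv x t)).2

noncomputable def fKernel (l : ℕ) (ρ θ : ℝ) : ℝ :=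
  cos θ ^ (2 * l + 1) / (cos θ ^ 2 * (cosh ρ - 1) + 2) ^ (l + 1)

noncomputable def fIntegral (l : ℕ) (ρ : ℝ) : ℝ :=
  ∫ θ in 0..π / 2, fKernel l ρ θ

theorem fKernel_denom_pos (ρ θ : ℝ) : 0 < cos θ ^ 2 * (cosh ρ - 1) + 2 := by
  have := one_le_cosh ρ
  positivity

theorem continuous_fKernel (l : ℕ) : Continuous (Function.uncurry (fKernel l)) := by
  unfold fKernel
  exact Continuous.div (by fun_prop) (by fun_prop)
    fun p => (pow_pos (fKernel_denom_pos p.1 p.2) _).ne'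

theorem hasDerivAt_fKernel (l : ℕ) (ρ θ : ℝ) :
    HasDerivAt (fun ρ => fKernel l ρ θ) (-(l + 1) * sinh ρ * fKernel (l + 1) ρ θ) ρ := by
  have hq : HasDerivAt (fun ρ => cos θ ^ 2 * (cosh ρ - 1) + 2) (cos θ ^ 2 * sinh ρ) ρ := by
    simpa using (((hasDerivAt_cosh ρ).sub_const 1).const_mul (cos θ ^ 2)).add_const 2
  have hne := (fKernel_denom_pos ρ θ).ne'
  refine ((hasDerivAt_const ρ (cos θ ^ (2 * l + 1))).fun_div (hq.fun_pow (l + 1))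
    (pow_ne_zero _ hne)).congr_deriv ?_
  unfold fKernel
  rw [Nat.add_sub_cancel]
  field_simp
  push_cast
  ring

theorem hasDerivAt_fIntegral (l : ℕ) (ρ : ℝ) :
    HasDerivAt (fIntegral l) (-(l + 1) * sinh ρ * fIntegral (l + 1) ρ) ρ := by
  have := hasDerivAt_intervalIntegral_of_continuous (a := 0) (b := π / 2) (x₀ := ρ)
    (F' := fun ρ θ => -(l + 1) * sinh ρ * fKernel (l + 1) ρ θ) (continuous_fKernel l)
    (Continuous.mul (by fun_prop) (continuous_fKernel (l + 1))) (hasDerivAt_fKernel l)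
  rwa [intervalIntegral.integral_const_mul] at this

theorem fIntegral_pos (l : ℕ) (ρ : ℝ) : 0 < fIntegral l ρ := by
  refine intervalIntegral.intervalIntegral_pos_of_pos_on
    ((continuous_fKernel l).uncurry_left ρ |>.intervalIntegrable _ _) (fun θ hθ => ?_)
    (by positivity)
  have : 0 < cos θ := cos_pos_of_mem_Ioo ⟨by linarith [pi_pos, hθ.1], hθ.2⟩
  exact div_pos (pow_pos this _) (pow_pos (fKernel_denom_pos ρ θ) _)

theorem hf_zero_eq_fIntegral {ρ : ℝ} (hρ : 0 < ρ) : hf 0 ρ = 2 * fIntegral 0 ρ := by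
  set c := cosh (ρ / 2)
  set s := sinh (ρ / 2)
  have hs : 0 < s := sinh_pos_iff.2 (by linarith)
  have hc : c ^ 2 = s ^ 2 + 1 := cosh_sq _
  have hsinh : sinh ρ = 2 * s * c := by rw [← sinh_two_mul]; ring_nf
  have hcosh : cosh ρ = 2 * s ^ 2 + 1 := by
    rw [show ρ = 2 * (ρ / 2) by ring, cosh_two_mul, hc]; ring
  have hsc : s < c := by nlinarith [cosh_pos (ρ / 2)]
  have hfactor : ∀ θ, 0 < c - s * sin θ ∧ 0 < c + s * sin θ := fun θ => by
    have : |s * sin θ| ≤ s := by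
      rw [abs_mul, abs_of_pos hs]
      exact mul_le_of_le_one_right hs.le (abs_sin_le_one θ)
    constructor <;> linarith [abs_le.1 this]
  have hdenom : ∀ θ, cos θ ^ 2 * (cosh ρ - 1) + 2 = 2 * (c - s * sin θ) * (c + s * sin θ) :=
    fun θ => by rw [cos_sq', hcosh]; linear_combination (-2) * hc
  -- partial fractions along `hdenom`
  have hderiv : ∀ θ, HasDerivAt (fun θ => (log (c + s * sin θ) - log (c - s * sin θ)) / sinh ρ)
      (2 * fKernel 0 ρ θ) θ := fun θ => by
    have hsin := (hasDerivAt_sin θ).const_mul s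
    refine (((hsin.const_add c).log (hfactor θ).2.ne').fun_sub
      ((hsin.const_sub c).log (hfactor θ).1.ne')).div_const _ |>.congr_deriv ?_
    have := (hfactor θ).1.ne'
    have := (hfactor θ).2.ne'
    have : c ≠ 0 := (cosh_pos _).ne'
    rw [fKernel, hdenom, hsinh]
    field_simp
    ring
  rw [fIntegral, ← intervalIntegral.integral_const_mul,
    intervalIntegral.integral_eq_sub_of_hasDerivAt (fun θ _ => hderiv θ)
      ((continuous_const.mul ((continuous_fKernel 0).uncurry_left ρ)).intervalIntegrable _ _)]
  simp only [sin_pi_div_two, sin_zero, mul_one, mul_zero, add_zero, sub_zero, sub_self,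
    zero_div]
  rw [show c + s = exp (ρ / 2) from cosh_add_sinh _,
    show c - s = exp (-(ρ / 2)) from cosh_sub_sinh _, log_exp, log_exp, hf]
  ring

theorem hf_eq_fIntegral (l : ℕ) {ρ : ℝ} (hρ : 0 < ρ) : hf l ρ = 2 * l ! * fIntegral l ρ := by
  induction l generalizing ρ with
  | zero => simpa using hf_zero_eq_fIntegral hρ
  | succ l ih =>
    have hev : hf l =ᶠ[nhds ρ] fun ρ => 2 * l ! * fIntegral l ρ :=
      Filter.eventually_of_mem (Ioi_mem_nhds hρ) fun x hx => ih hx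
    show -(1 / sinh ρ) * deriv (hf l) ρ = _
    rw [hev.deriv_eq, ((hasDerivAt_fIntegral l ρ).const_mul _).deriv, Nat.factorial_succ]
    have := (sinh_pos_iff.2 hρ).ne'
    field_simp
    push_cast
    ring

theorem hf_pos (l : ℕ) {ρ : ℝ} (hρ : 0 < ρ) : 0 < hf l ρ := by
  rw [hf_eq_fIntegral l hρ]
  have := fIntegral_pos l ρ
  positivity

theorem hasDerivAt_hf (l : ℕ) {ρ : ℝ} (hρ : 0 < ρ) :
    HasDerivAt (hf l) (-sinh ρ * hf (l + 1) ρ) ρ := by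
  have hev : hf l =ᶠ[nhds ρ] fun ρ => 2 * l ! * fIntegral l ρ :=
    Filter.eventually_of_mem (Ioi_mem_nhds hρ) fun x hx => hf_eq_fIntegral l hx
  refine ((hasDerivAt_fIntegral l ρ).const_mul _).congr_of_eventuallyEq hev |>.congr_deriv ?_
  rw [hf_eq_fIntegral (l + 1) hρ, Nat.factorial_succ]
  push_cast
  ring

noncomputable def sigmaDeriv : Derivation ℝ (MvPolynomial ℕ ℝ) (MvPolynomial ℕ ℝ) :=
  mkDerivation ℝ fun n => X (n + 1)

theorem sigmaDeriv_X (n : ℕ) : sigmaDeriv (X n) = X (n + 1) :=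
  mkDerivation_X _ _ _

theorem sigmaDeriv_mem_nonnegCoeffs {p : MvPolynomial ℕ ℝ} (hp : p ∈ nonnegCoeffs ℕ ℝ) :
    sigmaDeriv p ∈ nonnegCoeffs ℕ ℝ :=
  derivation_mem_nonnegCoeffs _ (fun n => by rw [sigmaDeriv_X]; exact X_mem_nonnegCoeffs _) hp

theorem sigmaDeriv_mem_supported {k : ℕ} {p : MvPolynomial ℕ ℝ}
    (hp : p ∈ supported ℝ (Set.Iio k)) : sigmaDeriv p ∈ supported ℝ (Set.Iio (k + 1)) :=
  derivation_mem_supported _ (Set.Iio_subset_Iio k.le_succ)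
    (fun n hn => by rw [sigmaDeriv_X]; exact X_mem_supported.2 (Nat.succ_lt_succ hn)) hp

noncomputable def alphaPoly (t : ℝ) : ℕ → MvPolynomial ℕ ℝ
  | 0 => X 0
  | k + 1 => X 0 * alphaPoly t k + (2 * t) • sigmaDeriv (alphaPoly t k)

theorem alphaOdd_succ_eq_eval (t : ℝ) (k : ℕ) {ρ : ℝ} (hρ : 0 < ρ) :
    alphaOdd (k + 1) t ρ = eval (fun n => hf n ρ) (alphaPoly t k) := by
  induction k generalizing ρ with
  | zero => simp [alphaOdd, alphaPoly, hf]
  | succ k ih =>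
    have hev : alphaOdd (k + 1) t =ᶠ[nhds ρ] fun ρ => eval (fun n => hf n ρ) (alphaPoly t k) :=
      Filter.eventually_of_mem (Ioi_mem_nhds hρ) fun x hx => ih hx
    have hD := hasDerivAt_eval_of_derivation ((-sinh ρ) • sigmaDeriv) (g := hf) (x := ρ)
      (fun n => by simpa [sigmaDeriv_X] using hasDerivAt_hf n hρ) (alphaPoly t k)
    show (ρ / sinh ρ) * alphaOdd (k + 1) t ρ -
      2 * t * ((1 / sinh ρ) * deriv (alphaOdd (k + 1) t) ρ) = _
    rw [hev.deriv_eq, hD.deriv, ih hρ]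
    have := (sinh_pos_iff.2 hρ).ne'
    simp only [alphaPoly, Derivation.smul_apply, smul_eval, map_add, eval_mul, eval_X]
    rw [hf]
    field_simp
    ring

noncomputable def alphaCoeff : ℕ → ℕ → MvPolynomial ℕ ℝ
  | 0, i => if i = 0 then X 0 else 0
  | k + 1, 0 => X 0 * alphaCoeff k 0
  | k + 1, i + 1 => X 0 * alphaCoeff k (i + 1) + (2 : ℝ) • sigmaDeriv (alphaCoeff k i)

theorem alphaCoeff_eq_zero_of_lt {k i : ℕ} (h : k < i) : alphaCoeff k i = 0 := by
  induction k generalizing i with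
  | zero => simp [alphaCoeff, h.ne']
  | succ k ih =>
    obtain ⟨i, rfl⟩ := Nat.exists_eq_add_one_of_ne_zero (by omega : i ≠ 0)
    simp [alphaCoeff, ih (by omega : k < i + 1), ih (by omega : k < i)]

theorem alphaCoeff_zero_right (k : ℕ) : alphaCoeff k 0 = X 0 ^ (k + 1) := by
  induction k with
  | zero => simp [alphaCoeff]
  | succ k ih => rw [alphaCoeff, ih, pow_succ' _ (k + 1)]

theorem alphaCoeff_mem_nonnegCoeffs (k i : ℕ) : alphaCoeff k i ∈ nonnegCoeffs ℕ ℝ := by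
  have hX : (X 0 : MvPolynomial ℕ ℝ) ∈ nonnegCoeffs ℕ ℝ := X_mem_nonnegCoeffs 0
  induction k generalizing i with
  | zero => unfold alphaCoeff; split_ifs; exacts [hX, zero_mem _]
  | succ k ih =>
    cases i with
    | zero => exact mul_mem hX (ih 0)
    | succ i =>
      exact add_mem (mul_mem hX (ih _))
        (smul_mem_nonnegCoeffs zero_le_two (sigmaDeriv_mem_nonnegCoeffs (ih i)))

theorem alphaCoeff_mem_supported (k i : ℕ) : alphaCoeff k i ∈ supported ℝ (Set.Iio (k + 1)) := by
  induction k generalizing i with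
  | zero =>
    unfold alphaCoeff; split_ifs
    exacts [X_mem_supported.2 (by simp), zero_mem _]
  | succ k ih =>
    have hX : (X 0 : MvPolynomial ℕ ℝ) ∈ supported ℝ (Set.Iio (k + 2)) :=
      X_mem_supported.2 (by simp)
    have hmono := supported_mono (R := ℝ) (Set.Iio_subset_Iio (Nat.le_succ (k + 1)))
    cases i with
    | zero => exact mul_mem hX (hmono (ih 0))
    | succ i =>
      exact add_mem (mul_mem hX (hmono (ih _)))
        (Subalgebra.smul_mem _ (sigmaDeriv_mem_supported (ih i)) _)

theorem alphaPoly_eq_sum (t : ℝ) (k : ℕ) :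
    alphaPoly t k = ∑ i ∈ range (k + 1), t ^ i • alphaCoeff k i := by
  induction k with
  | zero => simp [alphaPoly, alphaCoeff]
  | succ k ih =>
    have hext : ∑ i ∈ range (k + 1), t ^ i • alphaCoeff k i =
        ∑ i ∈ range (k + 2), t ^ i • alphaCoeff k i := by
      rw [sum_range_succ _ (k + 1), alphaCoeff_eq_zero_of_lt k.lt_succ_self, smul_zero, add_zero]
    rw [alphaPoly, ih, sum_range_succ' _ (k + 1)]
    nth_rewrite 1 [hext]
    rw [sum_range_succ' _ (k + 1)]
    simp only [alphaCoeff, smul_add, sum_add_distrib, map_sum, mul_add, mul_sum, smul_sum,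
      mul_smul_comm, smul_smul, Derivation.map_smul, pow_zero, one_smul]
    rw [add_right_comm]
    congr 2
    exact sum_congr rfl fun i _ => by rw [pow_succ]; ring_nf

theorem alphaOdd_succ_eq_sum (t : ℝ) (k : ℕ) {ρ : ℝ} (hρ : 0 < ρ) :
    alphaOdd (k + 1) t ρ =
      ∑ i ∈ range (k + 1), t ^ i * eval (fun n => hf n ρ) (alphaCoeff k i) := by
  rw [alphaOdd_succ_eq_eval t k hρ, alphaPoly_eq_sum, map_sum]
  simp only [smul_eval]

theorem alphaOdd_succ_pos {t : ℝ} (ht : 0 ≤ t) (k : ℕ) {ρ : ℝ} (hρ : 0 < ρ) :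
    0 < alphaOdd (k + 1) t ρ := by
  rw [alphaOdd_succ_eq_sum t k hρ, sum_range_succ', pow_zero, one_mul, alphaCoeff_zero_right,
    map_pow, eval_X]
  refine add_pos_of_nonneg_of_pos (sum_nonneg fun i _ => mul_nonneg (pow_nonneg ht _) ?_)
    (pow_pos (hf_pos 0 hρ) _)
  exact eval_nonneg_of_mem_nonnegCoeffs (alphaCoeff_mem_nonnegCoeffs k _) fun n => (hf_pos n hρ).le

theorem alphaOdd_poly_rep (m : ℕ) (hm : 1 ≤ m) :
    ∃ P : ℕ → MvPolynomial (Fin m) ℝ,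
      (∀ i d, 0 ≤ MvPolynomial.coeff d (P i)) ∧
      ∀ t ρ : ℝ, 0 < t → 0 < ρ →
        alphaOdd m t ρ =
          ∑ i ∈ Finset.range m,
            t ^ i * MvPolynomial.eval (fun s : Fin m => hf s ρ) (P i) ∧
        0 < alphaOdd m t ρ := by
  obtain ⟨k, rfl⟩ : ∃ k, m = k + 1 := ⟨m - 1, by omega⟩
  have hrename (i : ℕ) : ∃ q : MvPolynomial (Fin (k + 1)) ℝ, rename Fin.val q = alphaCoeff k i :=
    exists_rename_eq_of_vars_subset_range _ _ Fin.val_injective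
      (by rw [Fin.range_val]; exact mem_supported.1 (alphaCoeff_mem_supported k i))
  choose P hP using hrename
  refine ⟨P, fun i d => ?_, fun t ρ ht hρ => ⟨?_, alphaOdd_succ_pos ht.le k hρ⟩⟩
  · rw [← coeff_rename_mapDomain _ Fin.val_injective, hP]
    exact alphaCoeff_mem_nonnegCoeffs k i _
  · have heval (i : ℕ) : eval (fun s : Fin (k + 1) => hf s ρ) (P i) =
        eval (fun n => hf n ρ) (alphaCoeff k i) := by
      rw [← hP, eval_rename]
      rfl
    simp only [heval]
    exact alphaOdd_succ_eq_sum t k hρ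
end
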